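/- arXiv:2406.03883 — 3 statements merged into one kernel-verified Lean document; each statement's English description precedes it below -/
import Mathlib

section
/- Let D be a directed graph and let a, b be vertices of D. Let P be a directed path in D and let Q be a directed a–b path in D. Then there exists a directed a–b path Q' with Q' ⊆ P ∪ Q such that P and Q' are laced. -/
set_option autoImplicit false

/-- A directed graph on a vertex type `V`: a set of vertices together with a set of
directed edges (ordered pairs of vertices). -/
structure DiGraph (V : Type*) where
  verts : Set V
  edges : Set (V × V)

namespace DiGraph

variable {V : Type*}

/-- Well-formedness: every edge joins two distinct vertices of the graph. -/
def WF (D : DiGraph V) : Prop :=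
  ∀ e ∈ D.edges, e.1 ∈ D.verts ∧ e.2 ∈ D.verts ∧ e.1 ≠ e.2

/-- `A` is a subgraph of `D`. -/
def IsSubgraph (A D : DiGraph V) : Prop :=
  A.verts ⊆ D.verts ∧ A.edges ⊆ D.edges ∧ ∀ e ∈ A.edges, e.1 ∈ A.verts ∧ e.2 ∈ A.verts

instance : Union (DiGraph V) := ⟨fun A B => ⟨A.verts ∪ B.verts, A.edges ∪ B.edges⟩⟩

instance : Inter (DiGraph V) := ⟨fun A B => ⟨A.verts ∩ B.verts, A.edges ∩ B.edges⟩⟩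

/-- Union of a family of directed graphs. -/
def iUnion {ι : Type*} (F : ι → DiGraph V) : DiGraph V :=
  ⟨⋃ i, (F i).verts, ⋃ i, (F i).edges⟩

/-- Union of a family of directed graphs indexed by a set of naturals. -/
def biUnion (s : Set ℕ) (F : ℕ → DiGraph V) : DiGraph V :=
  ⟨⋃ i ∈ s, (F i).verts, ⋃ i ∈ s, (F i).edges⟩

/-- The empty directed graph. -/
def emptyGraph : DiGraph V := ⟨∅, ∅⟩

/-- Delete a vertex (and all incident edges). -/
def deleteVert (D : DiGraph V) (w : V) : DiGraph V :=
  ⟨D.verts \ {w}, {e ∈ D.edges | e.1 ≠ w ∧ e.2 ≠ w}⟩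

/-- Delete an edge. -/
def deleteEdge (D : DiGraph V) (e : V × V) : DiGraph V :=
  ⟨D.verts, D.edges \ {e}⟩

end DiGraph

open DiGraph

variable {V : Type*}

/-- The edge set of a list of vertices, read as a directed path. -/
def pathEdges (l : List V) : Set (V × V) := {e | e ∈ l.zip l.tail}

/-- The directed graph of a directed path given by a list of vertices. -/
def pathGraph (l : List V) : DiGraph V := ⟨{v | v ∈ l}, pathEdges l⟩

/-- The directed graph `𝒟(P)` of an undirected path `P` given by a list of vertices:
each edge is replaced by the two opposite directed edges. -/
def doublePathGraph (l : List V) : DiGraph V :=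
  ⟨{v | v ∈ l}, {e | e ∈ l.zip l.tail ∨ (e.2, e.1) ∈ l.zip l.tail}⟩

/-- The edge set of a directed cycle through the given list of vertices. -/
def cycleEdges (l : List V) : Set (V × V) :=
  {e | ∃ i : Fin l.length,
    l.get i = e.1 ∧ l.get ⟨((i : ℕ) + 1) % l.length, Nat.mod_lt _ i.pos⟩ = e.2}

/-- The directed cycle through the given list of vertices. -/
def cycleGraph (l : List V) : DiGraph V := ⟨{v | v ∈ l}, cycleEdges l⟩

/-- `l` is a directed path in `D`: a nonempty list of distinct vertices of `D`
consecutively joined by edges of `D`. -/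
def IsPathList (D : DiGraph V) (l : List V) : Prop :=
  l ≠ [] ∧ l.Nodup ∧ (∀ v ∈ l, v ∈ D.verts) ∧
    List.Chain' (fun a b => (a, b) ∈ D.edges) l

/-- `l` is a directed `a`–`b` path in `D`. -/
def IsPathFrom (D : DiGraph V) (l : List V) (a b : V) : Prop :=
  IsPathList D l ∧ l.head? = some a ∧ l.getLast? = some b

/-- There is a directed `a`–`b` path in `D`. -/
def Reaches (D : DiGraph V) (a b : V) : Prop := ∃ l, IsPathFrom D l a b

/-- `D` is strongly connected. -/
def StronglyConnected (D : DiGraph V) : Prop :=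
  ∀ a ∈ D.verts, ∀ b ∈ D.verts, Reaches D a b

/-- `a` and `b` are mutually reachable in `D`. -/
def MutuallyReach (D : DiGraph V) (a b : V) : Prop := Reaches D a b ∧ Reaches D b a

/-- `P` is (the directed graph of) a directed path. -/
def IsPathGraph (P : DiGraph V) : Prop := ∃ l : List V, l ≠ [] ∧ l.Nodup ∧ P = pathGraph l

/-- `P` is a double path with endpoints `a` and `b`. -/
def IsDoublePathFrom (P : DiGraph V) (a b : V) : Prop :=
  ∃ l : List V, l ≠ [] ∧ l.Nodup ∧ l.head? = some a ∧ l.getLast? = some b ∧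
    P = doublePathGraph l

/-- `C` is the directed cycle on the list `l`. -/
def IsCycleGraphOn (C : DiGraph V) (l : List V) : Prop :=
  2 ≤ l.length ∧ l.Nodup ∧ C = cycleGraph l

/-- `C` is a directed cycle. -/
def IsCycleGraph (C : DiGraph V) : Prop := ∃ l, IsCycleGraphOn C l

/-- `l` is a directed `X`–`Y` path in `D`: its startvertex lies in `X`, its endvertex in `Y`,
and no internal vertex lies in `X ∪ Y`. -/
def IsXYPathList (D : DiGraph V) (X Y : Set V) (l : List V) : Prop :=
  IsPathList D l ∧ (∀ a, l.head? = some a → a ∈ X) ∧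
    (∀ b, l.getLast? = some b → b ∈ Y) ∧
    ∀ v ∈ l.tail.dropLast, v ∉ X ∪ Y

/-- `(u, v)` is the only outgoing edge of `u`. -/
def onlyOut (D : DiGraph V) (u v : V) : Prop :=
  (u, v) ∈ D.edges ∧ ∀ w, (u, w) ∈ D.edges → w = v

/-- `(u, v)` is the only incoming edge of `v`. -/
def onlyIn (D : DiGraph V) (u v : V) : Prop :=
  (u, v) ∈ D.edges ∧ ∀ w, (w, v) ∈ D.edges → w = u

/-- Contract the edge `(u, v)`, identifying the contracted vertex with `x`. -/
def contractEdgeTo (D : DiGraph V) (u v x : V) : DiGraph V :=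
  ⟨(D.verts \ {u, v}) ∪ {x},
   {e | (e.1 ∉ ({u, v} : Set V) ∧ e.2 ∉ ({u, v} : Set V) ∧ e ∈ D.edges) ∨
        (e.2 = x ∧ e.1 ∉ ({u, v} : Set V) ∧ ((e.1, u) ∈ D.edges ∨ (e.1, v) ∈ D.edges)) ∨
        (e.1 = x ∧ e.2 ∉ ({u, v} : Set V) ∧ ((u, e.2) ∈ D.edges ∨ (v, e.2) ∈ D.edges))}⟩

/-- A single butterfly contraction: `(u, v)` is butterfly contractible and the contracted
vertex is identified with `u` if `(u, v)` is the only incoming edge of `v`, and with `v`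
if it is the only outgoing edge of `u`. -/
def ButterflyStep (D D' : DiGraph V) : Prop :=
  ∃ u v x : V, ((onlyIn D u v ∧ x = u) ∨ (onlyOut D u v ∧ x = v)) ∧
    D' = contractEdgeTo D u v x

/-- `D` can be transformed into `H` by repeatedly contracting butterfly contractible edges. -/
def ButterflyContracts (D H : DiGraph V) : Prop :=
  Relation.ReflTransGen ButterflyStep D H

/-- `H` is a butterfly minor of `D`: `H` is obtained from a subgraph of `D` by repeatedly
contracting butterfly contractible edges. -/
def IsButterflyMinor (H D : DiGraph V) : Prop :=
  ∃ D₀, IsSubgraph D₀ D ∧ ButterflyContracts D₀ H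

section Laced

variable [DecidableEq V]

/-- The segment `xPy` of a path list `P` from `x` to `y`. -/
def seg (P : List V) (x y : V) : List V :=
  (P.drop (P.idxOf x)).take (P.idxOf y + 1 - P.idxOf x)

/-- The two directed paths `P` and `Q` are laced. -/
def Laced (P Q : List V) : Prop :=
  (∀ v ∈ P, v ∉ Q) ∨
  ∃ (ℓ : ℕ) (hℓ : 0 < ℓ) (x y : Fin ℓ → V),
    (∀ i, x i ∈ P ∧ x i ∈ Q ∧ y i ∈ P ∧ y i ∈ Q) ∧
    (∀ i, P.idxOf (x i) ≤ P.idxOf (y i)) ∧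
    (∀ i j : Fin ℓ, (j : ℕ) = (i : ℕ) + 1 → P.idxOf (y i) < P.idxOf (x j)) ∧
    (∀ i, Q.idxOf (x i) ≤ Q.idxOf (y i)) ∧
    (∀ i j : Fin ℓ, (j : ℕ) = (i : ℕ) + 1 → Q.idxOf (y j) < Q.idxOf (x i)) ∧
    (∀ i, seg P (x i) (y i) = seg Q (x i) (y i)) ∧
    (∀ i j : Fin ℓ, (j : ℕ) = (i : ℕ) + 1 →
       ∀ v ∈ ((seg Q (y j) (x i)).tail).dropLast, v ∉ P) ∧
    (∀ v ∈ Q.take (Q.idxOf (x ⟨ℓ - 1, Nat.sub_lt hℓ Nat.one_pos⟩) + 1),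
       v ∈ P → v = x ⟨ℓ - 1, Nat.sub_lt hℓ Nat.one_pos⟩) ∧
    (∀ v ∈ Q.drop (Q.idxOf (y ⟨0, hℓ⟩)), v ∈ P → v = y ⟨0, hℓ⟩)

end Laced

/-- `T` is an out-arborescence with root `r`. -/
def IsOutArborescence (T : DiGraph V) (r : V) : Prop :=
  r ∈ T.verts ∧ T.WF ∧ (∀ v ∈ T.verts, Reaches T r v) ∧
    (∀ v ∈ T.verts, v ≠ r → ∃! u, (u, v) ∈ T.edges) ∧ ∀ u, (u, r) ∉ T.edges

/-- `T` is an in-arborescence with root `r`. -/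
def IsInArborescence (T : DiGraph V) (r : V) : Prop :=
  r ∈ T.verts ∧ T.WF ∧ (∀ v ∈ T.verts, Reaches T v r) ∧
    (∀ v ∈ T.verts, v ≠ r → ∃! u, (v, u) ∈ T.edges) ∧ ∀ u, (r, u) ∉ T.edges

/-- Contract a set `S` of vertices of `D` to the single vertex `r`. -/
def contractSetTo (D : DiGraph V) (S : Set V) (r : V) : DiGraph V :=
  ⟨(D.verts \ S) ∪ {r},
   {e | (e.1 ∉ S ∧ e.2 ∉ S ∧ e ∈ D.edges) ∨
        (e.2 = r ∧ e.1 ∉ S ∧ ∃ s ∈ S, (e.1, s) ∈ D.edges) ∨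
        (e.1 = r ∧ e.2 ∉ S ∧ ∃ s ∈ S, (s, e.2) ∈ D.edges)}⟩

/-- `D'` is obtained from `D` by replacing the vertex `w` by the directed cycle on `c`,
such that the strong components of `D − w` become incident with distinct vertices of this
cycle; `f` assigns to each vertex of `D − w` the cycle vertex its strong component is
attached to. -/
def ReplacedByCycle (D : DiGraph V) (w : V) (c : List V) (f : V → V) (D' : DiGraph V) : Prop :=
  c.Nodup ∧ 2 ≤ c.length ∧
  (∀ v ∈ c, v = w ∨ v ∉ D.verts) ∧
  (∀ u ∈ (D.deleteVert w).verts, f u ∈ c) ∧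
  (∀ u v, MutuallyReach (D.deleteVert w) u v → f u = f v) ∧
  (∀ u v, u ∈ (D.deleteVert w).verts → v ∈ (D.deleteVert w).verts →
     ¬ MutuallyReach (D.deleteVert w) u v → f u ≠ f v) ∧
  D'.verts = (D.verts \ {w}) ∪ {v | v ∈ c} ∧
  D'.edges = (D.deleteVert w).edges ∪ cycleEdges c
    ∪ {e | (e.1, w) ∈ D.edges ∧ e.1 ≠ w ∧ e.2 = f e.1}
    ∪ {e | (w, e.2) ∈ D.edges ∧ e.2 ≠ w ∧ e.1 = f e.2}

/-- `D` is shaped by a star, with set of teeth `T`. -/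
def StarShapedWithTeeth (D : DiGraph V) (T : Set V) : Prop :=
  (IsCycleGraph D ∧ T = D.verts) ∨
  ∃ (m : ℕ) (c : V) (F : Fin m → List V),
    0 < m ∧
    (∀ i, 2 ≤ (F i).length ∧ (F i).Nodup ∧ (F i).head? = some c) ∧
    (∀ i j, i ≠ j → ∀ v, v ∈ F i → v ∈ F j → v = c) ∧
    T = {v | ∃ i, (F i).getLast? = some v} ∧
    (D = DiGraph.iUnion (fun i => doublePathGraph (F i)) ∨
     (3 ≤ m ∧ ∃ (cyc : List V) (f : V → V),
        cyc.length = m ∧ c ∉ cyc ∧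
        ReplacedByCycle (DiGraph.iUnion fun i => doublePathGraph (F i)) c cyc f D))

/-- Replacing the junction `j` by a directed cycle of length 3: if `j` is a tooth then `j`
is a vertex of this cycle and the strong components of `D − j` become incident with
distinct other vertices; otherwise the strong components become incident with distinct
vertices of the cycle. -/
def TriangleReplaceStep {V : Type*} (teeth : Set V) (j : V) (D D₁ : DiGraph V) : Prop :=
  ∃ (c : List V) (f : V → V),
    c.length = 3 ∧
    ((j ∈ teeth ∧ j ∈ c ∧ ∀ u ∈ (D.deleteVert j).verts, f u ≠ j) ∨
     (j ∉ teeth ∧ j ∉ c)) ∧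
    ReplacedByCycle D j c f D₁

/-- Iteratively replace the junctions in the given list by directed cycles of length 3. -/
inductive ReplaceChain {V : Type*} (teeth : Set V) : DiGraph V → List V → DiGraph V → Prop
  | nil (D : DiGraph V) : ReplaceChain teeth D [] D
  | cons {D D₁ D' : DiGraph V} {j : V} {js : List V} :
      TriangleReplaceStep teeth j D D₁ → ReplaceChain teeth D₁ js D' →
      ReplaceChain teeth D (j :: js) D'

/-- `D` is shaped by a comb (with back `B` and spikes `S`), with set of teeth `T`. -/
def CombShapedWithTeeth (D : DiGraph V) (T : Set V) : Prop :=
  ∃ (B : List V) (m : ℕ) (S : Fin m → List V),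
    B ≠ [] ∧ B.Nodup ∧
    (∀ i, S i ≠ [] ∧ (S i).Nodup) ∧
    (∀ i, ∀ h, (S i).head? = some h → h ∈ B) ∧
    (∀ i, ∀ v ∈ (S i).tail, v ∉ B) ∧
    (∀ i j, i ≠ j → ∀ v ∈ S i, v ∉ S j) ∧
    T = {v | ∃ i, (S i).getLast? = some v} ∧
    (D = doublePathGraph B ∪ DiGraph.iUnion (fun i => doublePathGraph (S i)) ∨
     ∃ js : List V, js.Nodup ∧
       {j | j ∈ js} = {j | j ∈ B.tail.dropLast ∧ ∃ i, (S i).head? = some j} ∧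
       ReplaceChain T (doublePathGraph B ∪ DiGraph.iUnion fun i => doublePathGraph (S i)) js D)

/-- `D` is shaped by a star. -/
def ShapedByStar (D : DiGraph V) : Prop := ∃ T, StarShapedWithTeeth D T

/-- `D` is shaped by a comb. -/
def ShapedByComb (D : DiGraph V) : Prop := ∃ T, CombShapedWithTeeth D T

/-!
Let `x` be the first vertex of `Q` on `P`, and `y` the last vertex of `Q` that lies on `P` but not
before `x`. Replacing the part of `Q` between `x` and `y` by `xPy` leaves a remainder of `Q` after
`y` whose vertices on `P` all lie before `x` on `P`; rerouting this remainder recursively produces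
the segments `xᵢPyᵢ` of the lacing, met by the new path in decreasing order along `P`, with the
pieces of `Q` joining them avoiding `P`.
-/

namespace List

variable {α : Type*}

lemma exists_eq_append_cons_of_exists_first {p : α → Prop} {l : List α} (h : ∃ a ∈ l, p a) :
    ∃ s a t, l = s ++ a :: t ∧ p a ∧ ∀ b ∈ s, ¬ p b := by
  induction l with
  | nil => simp at h
  | cons c l ih =>
    by_cases hc : p c
    · exact ⟨[], c, l, rfl, hc, by simp⟩
    · obtain ⟨s, a, t, rfl, ha, hs⟩ := ih (by simpa [hc] using h)
      exact ⟨c :: s, a, t, rfl, ha, by simpa [hc] using hs⟩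

lemma exists_eq_append_cons_of_exists_last {p : α → Prop} {l : List α} (h : ∃ a ∈ l, p a) :
    ∃ s a t, l = s ++ a :: t ∧ p a ∧ ∀ b ∈ t, ¬ p b := by
  obtain ⟨s, a, t, hl, ha, hs⟩ :=
    exists_eq_append_cons_of_exists_first (l := l.reverse) (by simpa)
  exact ⟨t.reverse, a, s.reverse, by simpa using congrArg reverse hl, ha, by simpa using hs⟩

variable [DecidableEq α]

lemma idxOf_append_cons_of_nodup {s t : List α} {a : α} (h : (s ++ a :: t).Nodup) :
    (s ++ a :: t).idxOf a = s.length := by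
  have ha : a ∉ s := fun ha => (nodup_append.1 h).2.2 a ha a mem_cons_self rfl
  simp [idxOf_append_of_notMem ha]

lemma idxOf_eq_of_head? {s M t : List α} {x : α} (h : (s ++ M ++ t).Nodup)
    (hx : M.head? = some x) : (s ++ M ++ t).idxOf x = s.length := by
  obtain ⟨M₁, rfl⟩ := head?_eq_some_iff.1 hx
  simpa using idxOf_append_cons_of_nodup (s := s) (t := M₁ ++ t) (by simpa using h)

lemma idxOf_eq_of_getLast? {s M t : List α} {y : α} (h : (s ++ M ++ t).Nodup)
    (hy : M.getLast? = some y) : (s ++ M ++ t).idxOf y = s.length + M.length - 1 := by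
  obtain ⟨M₂, rfl⟩ := getLast?_eq_some_iff.1 hy
  simpa using idxOf_append_cons_of_nodup (s := s ++ M₂) (t := t) (by simpa using h)

end List

lemma isChain_iff_forall_mem_pathEdges {r : V → V → Prop} {l : List V} :
    l.IsChain r ↔ ∀ e ∈ pathEdges l, r e.1 e.2 := by
  induction l with
  | nil => simp [pathEdges]
  | cons a l ih =>
    cases l with
    | nil => simp [pathEdges]
    | cons b l => simp_all [pathEdges, List.isChain_cons_cons]

lemma isChain_mem_pathEdges (l : List V) : l.IsChain fun u v => (u, v) ∈ pathEdges l :=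
  isChain_iff_forall_mem_pathEdges.2 fun _ he => he

lemma mem_of_mem_pathEdges {l : List V} {e : V × V} (he : e ∈ pathEdges l) :
    e.1 ∈ l ∧ e.2 ∈ l :=
  have h := List.of_mem_zip he
  ⟨h.1, List.mem_of_mem_tail h.2⟩

section Seg

variable [DecidableEq V]

lemma seg_isInfix (P : List V) (x y : V) : seg P x y <:+: P :=
  (List.take_prefix _ _).isInfix.trans (List.drop_suffix _ _).isInfix

lemma head?_seg {P : List V} {x y : V} (hx : x ∈ P) (hxy : P.idxOf x ≤ P.idxOf y) :
    (seg P x y).head? = some x := by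
  have := List.idxOf_lt_length_iff.2 hx
  simp only [seg, List.head?_take, List.head?_drop]
  rw [if_neg (by omega)]
  simp [this]

lemma getLast?_seg {P : List V} {x y : V} (hy : y ∈ P) (hxy : P.idxOf x ≤ P.idxOf y) :
    (seg P x y).getLast? = some y := by
  have := List.idxOf_lt_length_iff.2 hy
  simp only [seg, List.getLast?_take, List.getElem?_drop]
  rw [if_neg (by omega), show P.idxOf x + (P.idxOf y + 1 - P.idxOf x - 1) = P.idxOf y by omega]
  simp [this]

lemma le_idxOf_of_mem_seg {P : List V} (hP : P.Nodup) {x y v : V} (hv : v ∈ seg P x y) :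
    P.idxOf x ≤ P.idxOf v ∧ P.idxOf v ≤ P.idxOf y := by
  obtain ⟨k, hk, rfl⟩ := List.mem_iff_getElem.1 hv
  simp only [seg, List.length_take, List.length_drop, List.getElem_take, List.getElem_drop]
    at hk ⊢
  rw [hP.idxOf_getElem]
  omega

lemma seg_eq_of_nodup {s M t : List V} {x y : V} (h : (s ++ M ++ t).Nodup)
    (hx : M.head? = some x) (hy : M.getLast? = some y) : seg (s ++ M ++ t) x y = M := by
  have hM : 0 < M.length := List.length_pos_iff.2 fun h => by simp [h] at hx
  rw [seg, List.idxOf_eq_of_head? h hx, List.idxOf_eq_of_getLast? h hy,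
    show s.length + M.length - 1 + 1 - s.length = M.length by omega]
  simp

end Seg

section Lacing

variable [DecidableEq V]

/-- The pairs `(x₁, y₁), …, (x_ℓ, y_ℓ)` of `Laced P R`, listed in the order of `P`; their
positions on `R` are described by decompositions of `R` rather than by indices. -/
structure IsLacing (P R : List V) (ms : List (V × V)) : Prop where
  block : ∀ m ∈ ms, m.1 ∈ P ∧ m.2 ∈ P ∧ P.idxOf m.1 ≤ P.idxOf m.2 ∧
    ∃ s t, R = s ++ seg P m.1 m.2 ++ t
  gap : ms.IsChain fun p q => P.idxOf p.2 < P.idxOf q.1 ∧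
    ∃ s B t, R = s ++ q.2 :: B ++ p.1 :: t ∧ ∀ v ∈ B, v ∉ P
  initial : ∀ p ∈ ms.getLast?, ∃ B t, R = B ++ p.1 :: t ∧ ∀ v ∈ B, v ∉ P
  terminal : ∀ p ∈ ms.head?, ∃ s C, R = s ++ p.2 :: C ∧ ∀ v ∈ C, v ∉ P
  disjoint_of_nil : ms = [] → ∀ v ∈ R, v ∉ P

namespace IsLacing

variable {P R : List V} {ms : List (V × V)}

lemma of_disjoint (h : ∀ v ∈ R, v ∉ P) : IsLacing P R [] :=
  ⟨by simp, .nil, by simp, by simp, fun _ => h⟩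

lemma snd_mem (h : IsLacing P R ms) {m : V × V} (hm : m ∈ ms) : m.2 ∈ R := by
  obtain ⟨-, hy, hxy, s, t, rfl⟩ := h.block m hm
  simp [List.mem_of_mem_getLast? (getLast?_seg hy hxy)]

lemma append_seg (h : IsLacing P R ms) {A : List V} {x y : V} (hAP : ∀ v ∈ A, v ∉ P)
    (hx : x ∈ P) (hy : y ∈ P) (hxy : P.idxOf x ≤ P.idxOf y)
    (hR : ∀ v ∈ R, v ∈ P → P.idxOf v < P.idxOf x) :
    IsLacing P (A ++ seg P x y ++ R) (ms ++ [(x, y)]) := by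
  obtain ⟨S₁, hS₁⟩ := List.head?_eq_some_iff.1 (head?_seg hx hxy)
  obtain ⟨S₂, hS₂⟩ := List.getLast?_eq_some_iff.1 (getLast?_seg hy hxy)
  refine ⟨?_, ?_, ?_, ?_, by simp⟩
  · intro m hm
    rcases List.mem_append.1 hm with hm | hm
    · obtain ⟨h₁, h₂, h₃, s, t, rfl⟩ := h.block m hm
      exact ⟨h₁, h₂, h₃, A ++ seg P x y ++ s, t, by simp⟩
    · rw [List.mem_singleton.1 hm]
      exact ⟨hx, hy, hxy, A, R, rfl⟩
  · refine (h.gap.imp fun p q ⟨hpq, s, B, t, hR', hB⟩ =>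
      ⟨hpq, A ++ seg P x y ++ s, B, t, by simp [hR'], hB⟩).append (List.isChain_singleton _) ?_
    rintro p hp _ ⟨⟩
    have hp' := List.mem_of_mem_getLast? hp
    obtain ⟨B, t, hR', hB⟩ := h.initial p hp
    exact ⟨hR _ (h.snd_mem hp') (h.block p hp').2.1, A ++ S₂, B, t, by simp [hS₂, hR'], hB⟩
  · intro p hp
    rw [List.getLast?_concat, Option.mem_some_iff] at hp
    subst hp
    exact ⟨A, S₁ ++ R, by simp [hS₁], hAP⟩
  · rcases eq_or_ne ms [] with rfl | hms
    · rintro p ⟨⟩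
      exact ⟨A ++ S₂, R, by simp [hS₂], fun v hv hvP => h.disjoint_of_nil rfl v hv hvP⟩
    · intro p hp
      rw [List.head?_append_of_ne_nil _ hms] at hp
      obtain ⟨s, C, rfl, hC⟩ := h.terminal p hp
      exact ⟨A ++ seg P x y ++ s, C, by simp, hC⟩

lemma block_idxOf (h : IsLacing P R ms) (hR : R.Nodup) {m : V × V} (hm : m ∈ ms) :
    m.1 ∈ R ∧ m.2 ∈ R ∧ R.idxOf m.1 ≤ R.idxOf m.2 ∧ seg P m.1 m.2 = seg R m.1 m.2 := by
  obtain ⟨hx, hy, hxy, s, t, rfl⟩ := h.block m hm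
  have h₁ := head?_seg hx hxy
  have h₂ := getLast?_seg hy hxy
  refine ⟨?_, ?_, ?_, (seg_eq_of_nodup hR h₁ h₂).symm⟩
  · simp [List.mem_of_mem_head? h₁]
  · simp [List.mem_of_mem_getLast? h₂]
  · rw [List.idxOf_eq_of_head? hR h₁, List.idxOf_eq_of_getLast? hR h₂]
    have := List.length_pos_iff.2 (List.ne_nil_of_mem (List.mem_of_mem_head? h₁))
    omega

lemma gap_idxOf (h : IsLacing P R ms) (hR : R.Nodup) (i : ℕ) (hi : i + 1 < ms.length) :
    P.idxOf ms[i].2 < P.idxOf ms[i + 1].1 ∧ R.idxOf ms[i + 1].2 < R.idxOf ms[i].1 ∧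
      ∀ v ∈ (seg R ms[i + 1].2 ms[i].1).tail.dropLast, v ∉ P := by
  obtain ⟨hP, s, B, t, rfl, hB⟩ := List.isChain_iff_getElem.1 h.gap i hi
  have hM : s ++ ms[i + 1].2 :: B ++ ms[i].1 :: t =
      s ++ (ms[i + 1].2 :: B ++ [ms[i].1]) ++ t := by
    simp
  rw [hM] at hR ⊢
  refine ⟨hP, ?_, ?_⟩
  · rw [List.idxOf_eq_of_head? hR rfl, List.idxOf_eq_of_getLast? hR List.getLast?_concat]
    simp
  · rw [seg_eq_of_nodup hR rfl List.getLast?_concat]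
    simpa using hB

lemma eq_fst_of_mem_take (h : IsLacing P R ms) (hR : R.Nodup) {p : V × V}
    (hp : p ∈ ms.getLast?) :
    ∀ v ∈ R.take (R.idxOf p.1 + 1), v ∈ P → v = p.1 := by
  obtain ⟨B, t, rfl, hB⟩ := h.initial p hp
  rw [List.idxOf_append_cons_of_nodup hR]
  simp only [List.take_length_add_append, List.take_succ_cons, List.take_zero, List.mem_append,
    List.mem_singleton]
  rintro v (hv | hv) hvP
  · exact absurd hvP (hB v hv)
  · exact hv

lemma eq_snd_of_mem_drop (h : IsLacing P R ms) (hR : R.Nodup) {p : V × V} (hp : p ∈ ms.head?) :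
    ∀ v ∈ R.drop (R.idxOf p.2), v ∈ P → v = p.2 := by
  obtain ⟨s, C, rfl, hC⟩ := h.terminal p hp
  rw [List.idxOf_append_cons_of_nodup hR]
  simp only [List.drop_left', List.mem_cons]
  rintro v (hv | hv) hvP
  · exact hv
  · exact absurd hvP (hC v hv)

theorem laced (h : IsLacing P R ms) (hR : R.Nodup) : Laced P R := by
  rcases eq_or_ne ms [] with rfl | hms
  · exact Or.inl fun v hvP hvR => h.disjoint_of_nil rfl v hvR hvP
  have hblock (i : Fin ms.length) := h.block_idxOf hR (List.getElem_mem i.2)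
  have hgap (i j : Fin ms.length) (hij : (j : ℕ) = i + 1) :
      P.idxOf ms[i].2 < P.idxOf ms[j].1 ∧ R.idxOf ms[j].2 < R.idxOf ms[i].1 ∧
        ∀ v ∈ (seg R ms[j].2 ms[i].1).tail.dropLast, v ∉ P := by
    obtain ⟨j, hj⟩ := j
    simp only at hij
    subst hij
    exact h.gap_idxOf hR i hj
  refine Or.inr ⟨ms.length, List.length_pos_iff.2 hms, fun i => ms[i].1, fun i => ms[i].2,
    fun i => ⟨(h.block _ (List.getElem_mem _)).1, (hblock i).1,
      (h.block _ (List.getElem_mem _)).2.1, (hblock i).2.1⟩,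
    fun i => (h.block _ (List.getElem_mem _)).2.2.1,
    fun i j hij => (hgap i j hij).1, fun i => (hblock i).2.2.1,
    fun i j hij => (hgap i j hij).2.1, fun i => (hblock i).2.2.2,
    fun i j hij => (hgap i j hij).2.2, ?_, ?_⟩
  · exact h.eq_fst_of_mem_take hR (by simp [List.getLast?_eq_getElem?])
  · exact h.eq_snd_of_mem_drop hR (by simp [List.head?_eq_getElem?])

end IsLacing

end Lacing

section Reroute

variable [DecidableEq V]

structure IsReroute (r : V → V → Prop) (P Q R : List V) : Prop where
  nodup : R.Nodup
  isChain : R.IsChain r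
  head?_eq : R.head? = Q.head?
  getLast?_eq : R.getLast? = Q.getLast?
  mem : ∀ v ∈ R, v ∈ P ∨ v ∈ Q
  reach : ∀ v ∈ R, v ∈ P → ∃ w ∈ Q, w ∈ P ∧ P.idxOf v ≤ P.idxOf w

namespace IsReroute

variable {r : V → V → Prop} {P Q R : List V}

lemma refl (hQ : Q.Nodup) (hQr : Q.IsChain r) : IsReroute r P Q Q :=
  ⟨hQ, hQr, rfl, rfl, fun _ hv => .inr hv, fun v hv hvP => ⟨v, hv, hvP, le_rfl⟩⟩

lemma nodup_append_seg (h : IsReroute r P Q R) (hP : P.Nodup) {A : List V} {x y : V}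
    (hA : A.Nodup) (hAP : ∀ v ∈ A, v ∉ P) (hAQ : ∀ v ∈ A, v ∉ Q)
    (hR : ∀ v ∈ R, v ∈ P → P.idxOf v < P.idxOf x) : (A ++ seg P x y ++ R).Nodup := by
  have hSP : ∀ v ∈ seg P x y, v ∈ P := fun v hv => (seg_isInfix P x y).subset hv
  refine List.nodup_append.2 ⟨List.nodup_append.2 ⟨hA,
    hP.sublist (seg_isInfix P x y).sublist, ?_⟩, h.nodup, ?_⟩
  · rintro a ha b hb rfl
    exact hAP a ha (hSP a hb)
  · rintro a ha b hb rfl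
    rcases List.mem_append.1 ha with ha | ha
    · exact (h.mem a hb).elim (hAP a ha) (hAQ a ha)
    · exact absurd (hR a hb (hSP a ha)) (not_lt.2 (le_idxOf_of_mem_seg hP ha).1)

lemma append_seg (hP : P.Nodup) (hPr : P.IsChain r) {A M Q₁ R₁ : List V} {x y : V}
    (hQ : (A ++ (M ++ y :: Q₁)).Nodup) (hQr : (A ++ (M ++ y :: Q₁)).IsChain r)
    (hx : (M ++ y :: Q₁).head? = some x) (hAP : ∀ v ∈ A, v ∉ P) (hxP : x ∈ P)
    (hyP : y ∈ P) (hxy : P.idxOf x ≤ P.idxOf y) (h : IsReroute r P Q₁ R₁)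
    (hR₁ : ∀ v ∈ R₁, v ∈ P → P.idxOf v < P.idxOf x) :
    IsReroute r P (A ++ (M ++ y :: Q₁)) (A ++ seg P x y ++ R₁) := by
  have hS₁ := head?_seg hxP hxy
  have hS₂ := getLast?_seg hyP hxy
  have hAQ₁ : ∀ v ∈ A, v ∉ Q₁ := fun v hv hvQ₁ =>
    (List.nodup_append.1 hQ).2.2 v hv v (by simp [hvQ₁]) rfl
  refine ⟨h.nodup_append_seg hP (List.nodup_append.1 hQ).1 hAP hAQ₁ hR₁, ?_, ?_, ?_, ?_, ?_⟩
  · refine ((List.isChain_append.1 hQr).1.append (hPr.infix (seg_isInfix P x y)) ?_).append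
      h.isChain ?_
    · rw [hS₁]
      rintro a ha _ ⟨⟩
      exact (List.isChain_append.1 hQr).2.2 a ha x hx
    · rw [List.getLast?_append, hS₂, Option.some_or, h.head?_eq]
      rintro _ ⟨⟩ b hb
      exact (List.isChain_cons.1
        (hQr.suffix ((List.suffix_append M _).trans (List.suffix_append A _)))).1 b hb
  · simp [hS₁, hx]
  · simp [hS₂, h.getLast?_eq, List.getLast?_cons]
  · intro v hv
    rcases List.mem_append.1 hv with hv | hv
    · exact (List.mem_append.1 hv).elim (fun hv => .inr (by simp [hv]))
        fun hv => .inl ((seg_isInfix P x y).subset hv)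
    · exact (h.mem v hv).imp_right fun hv => by simp [hv]
  · intro v hv hvP
    simp only [List.mem_append] at hv
    rcases hv with (hv | hv) | hv
    · exact absurd hvP (hAP v hv)
    · exact ⟨y, by simp, hyP, (le_idxOf_of_mem_seg hP hv).2⟩
    · obtain ⟨w, hw, hwP, hvw⟩ := h.reach v hv hvP
      exact ⟨w, by simp [hw], hwP, hvw⟩

end IsReroute

theorem exists_isReroute_isLacing {r : V → V → Prop} {P : List V} (hP : P.Nodup)
    (hPr : P.IsChain r) (Q : List V) (hQ : Q.Nodup) (hQr : Q.IsChain r) :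
    ∃ R ms, IsReroute r P Q R ∧ IsLacing P R ms := by
  by_cases hQP : ∃ v ∈ Q, v ∈ P
  swap
  · exact ⟨Q, [], .refl hQ hQr, .of_disjoint fun v hv hvP => hQP ⟨v, hv, hvP⟩⟩
  obtain ⟨A, x, Q', rfl, hxP, hAP⟩ := List.exists_eq_append_cons_of_exists_first hQP
  obtain ⟨M, y, Q₁, hQ', ⟨hyP, hxy⟩, hQ₁⟩ :=
    List.exists_eq_append_cons_of_exists_last (p := fun v => v ∈ P ∧ P.idxOf x ≤ P.idxOf v)
      ⟨x, List.mem_cons_self, hxP, le_rfl⟩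
  have hsuffix : y :: Q₁ <:+ A ++ x :: Q' :=
    hQ' ▸ (List.suffix_append M _).trans (List.suffix_append A _)
  have : Q₁.length < (A ++ x :: Q').length := by
    simpa using Nat.lt_of_lt_of_le (Nat.lt_succ_self _) hsuffix.length_le
  obtain ⟨R₁, ms₁, hR₁, hms₁⟩ := exists_isReroute_isLacing hP hPr Q₁
    (hQ.sublist ((List.sublist_cons_self y Q₁).trans hsuffix.sublist)) (hQr.suffix hsuffix).tail
  have hR₁x : ∀ v ∈ R₁, v ∈ P → P.idxOf v < P.idxOf x := fun v hv hvP =>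
    let ⟨w, hw, hwP, hvw⟩ := hR₁.reach v hv hvP
    hvw.trans_lt (not_le.1 fun hxw => hQ₁ w hw ⟨hwP, hxw⟩)
  rw [hQ'] at hQ hQr ⊢
  exact ⟨_, _, hR₁.append_seg hP hPr hQ hQr (by rw [← hQ']; rfl) hAP hxP hyP hxy hR₁x,
    hms₁.append_seg hAP hxP hyP hxy hR₁x⟩
termination_by Q.length

end Reroute

/-- For every directed path `P` and every directed `a`–`b` path `Q` in a
directed graph `D` there is a directed `a`–`b` path `Q' ⊆ P ∪ Q` such that `P` and `Q'`
are laced. -/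
theorem exists_laced_path {V : Type*} [DecidableEq V] (D : DiGraph V) (a b : V)
    (P Q : List V) (hP : IsPathList D P) (hQ : IsPathFrom D Q a b) :
    ∃ Q' : List V, IsPathFrom D Q' a b ∧
      IsSubgraph (pathGraph Q') (pathGraph P ∪ pathGraph Q) ∧
      Laced P Q' := by
  obtain ⟨-, hPnd, hPD, hPr⟩ := hP
  obtain ⟨⟨-, hQnd, hQD, hQr⟩, ha, hb⟩ := hQ
  let r u v := (u, v) ∈ (pathGraph P ∪ pathGraph Q).edges
  have hrD : ∀ u v, r u v → (u, v) ∈ D.edges := by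
    rintro u v (h | h)
    · exact isChain_iff_forall_mem_pathEdges.1 hPr _ h
    · exact isChain_iff_forall_mem_pathEdges.1 hQr _ h
  obtain ⟨R, ms, hR, hms⟩ := exists_isReroute_isLacing (r := r) hPnd
    ((isChain_mem_pathEdges P).imp fun _ _ => .inl) Q hQnd
    ((isChain_mem_pathEdges Q).imp fun _ _ => .inr)
  refine ⟨R, ⟨⟨?_, hR.nodup, ?_, hR.isChain.imp hrD⟩, hR.head?_eq.trans ha,
    hR.getLast?_eq.trans hb⟩, ⟨hR.mem, ?_, fun e he => mem_of_mem_pathEdges he⟩,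
    hms.laced hR.nodup⟩
  · intro h
    simpa [h] using hR.head?_eq.trans ha
  · exact fun v hv => (hR.mem v hv).elim (hPD v) (hQD v)
  · exact fun e he => isChain_iff_forall_mem_pathEdges.1 hR.isChain e he
end

section
/- Let U be a set of vertices of a finite strongly connected directed graph D that is edge-minimal with the property of being strongly connected and containing U; precisely, assume that for every edge e of D there exist vertices u ≠ v ∈ U such that every directed u–v path in D contains e. Let A be a strongly connected subgraph of D. Then for every edge e of D with tail in V(A) and head in V(D) ∖ V(A), there exists v ∈ U for which there is no directed A–v path in D − e. -/
set_option autoImplicit false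

open DiGraph

variable {V : Type*}

/-!
Let `u, v ∈ U` be such that every `u`–`v` path of `D` uses `e`, and suppose `D − e` had an
`A`–`v` path starting at `a ∈ V(A)`. A path of `D` from `u` to the tail of `e` cannot use `e`,
since the tail occurs only as its endvertex; a path of `A` from the tail of `e` to `a` cannot
use `e` either, since the head of `e` lies outside `A`. Concatenating the three pieces and
shortening the resulting walk gives a `u`–`v` path in `D − e`, a contradiction.
-/

theorem List.isChain_iff_forall_mem_zip_tail {α : Type*} {R : α → α → Prop} :
    ∀ {l : List α}, l.IsChain R ↔ ∀ p ∈ l.zip l.tail, R p.1 p.2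
  | [] | [_] => by simp
  | a :: b :: t => by
    simp [List.isChain_cons_cons, List.isChain_iff_forall_mem_zip_tail (l := b :: t)]

theorem List.Nodup.getLast?_ne_fst_of_mem_zip_tail {α : Type*} :
    ∀ {l : List α}, l.Nodup → ∀ p ∈ l.zip l.tail, l.getLast? ≠ some p.1
  | [] | [_] => by simp
  | a :: b :: t => by
    intro hnd p hp
    rw [List.getLast?_cons_cons]
    simp only [List.tail_cons, List.zip_cons_cons, List.mem_cons] at hp
    rcases hp with rfl | hp
    · intro hlast
      exact (List.nodup_cons.1 hnd).1 (List.mem_of_getLast? hlast)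
    · exact hnd.of_cons.getLast?_ne_fst_of_mem_zip_tail p hp

section Paths

variable {G H : DiGraph V} {l : List V} {a b c : V}

theorem IsPathList.mono (hV : G.verts ⊆ H.verts) (hE : G.edges ⊆ H.edges)
    (hl : IsPathList G l) : IsPathList H l :=
  ⟨hl.1, hl.2.1, fun v hv => hV (hl.2.2.1 v hv), hl.2.2.2.imp fun _ _ h => hE h⟩

theorem Reaches.mono (hV : G.verts ⊆ H.verts) (hE : G.edges ⊆ H.edges)
    (h : Reaches G a b) : Reaches H a b :=
  let ⟨l, hl, ha, hb⟩ := h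
  ⟨l, hl.mono hV hE, ha, hb⟩

theorem IsPathList.isPathFrom (hl : IsPathList G l) :
    IsPathFrom G l (l.head hl.1) (l.getLast hl.1) :=
  ⟨hl, List.head?_eq_some_head hl.1, List.getLast?_eq_some_getLast hl.1⟩

theorem IsPathFrom.suffix {s t : List V} (h : IsPathFrom G (s ++ a :: t) c b) :
    IsPathFrom G (a :: t) a b := by
  obtain ⟨⟨-, hnd, hv, hch⟩, -, hb⟩ := h
  refine ⟨⟨List.cons_ne_nil _ _, hnd.of_append_right,
    fun w hw => hv w (List.mem_append_right _ hw), hch.right_of_append⟩, rfl, ?_⟩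
  rwa [List.getLast?_append_of_ne_nil _ (List.cons_ne_nil _ _)] at hb

theorem Reaches.of_edge_of_reaches (ha : a ∈ G.verts) (hac : (a, c) ∈ G.edges)
    (h : Reaches G c b) : Reaches G a b := by
  obtain ⟨l, hl, hc, hb⟩ := h
  by_cases hal : a ∈ l
  · obtain ⟨s, t, rfl⟩ := List.append_of_mem hal
    exact ⟨_, IsPathFrom.suffix ⟨hl, hc, hb⟩⟩
  · refine ⟨a :: l, ⟨List.cons_ne_nil _ _, List.nodup_cons.2 ⟨hal, hl.2.1⟩, ?_, ?_⟩, rfl, ?_⟩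
    · simpa [ha] using hl.2.2.1
    · exact List.isChain_cons.2 ⟨fun y hy => by simp_all, hl.2.2.2⟩
    · rw [List.getLast?_cons, hb]
      rfl

theorem Reaches.trans (hab : Reaches G a b) (hbc : Reaches G b c) : Reaches G a c := by
  obtain ⟨l, hl, ha, hb⟩ := hab
  induction l generalizing a with
  | nil => exact absurd rfl hl.1
  | cons x t ih =>
    obtain rfl : x = a := by simpa using ha
    cases t with
    | nil =>
      obtain rfl : x = b := by simpa using hb
      exact hbc
    | cons y t =>
      have hy : IsPathFrom G (y :: t) y b := IsPathFrom.suffix (s := [x]) ⟨hl, ha, hb⟩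
      exact (ih hy.1 rfl hy.2.2).of_edge_of_reaches (hl.2.2.1 x (by simp))
        (List.isChain_cons_cons.1 hl.2.2.2).1

theorem isPathList_deleteEdge_iff {e : V × V} :
    IsPathList (G.deleteEdge e) l ↔ IsPathList G l ∧ e ∉ l.zip l.tail := by
  constructor
  · rintro ⟨hne, hnd, hv, hch⟩
    exact ⟨⟨hne, hnd, hv, hch.imp fun _ _ h => h.1⟩,
      fun hel => (List.isChain_iff_forall_mem_zip_tail.1 hch e hel).2 rfl⟩
  · rintro ⟨⟨hne, hnd, hv, hch⟩, hel⟩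
    exact ⟨hne, hnd, hv, List.isChain_iff_forall_mem_zip_tail.2 fun p hp =>
      ⟨List.isChain_iff_forall_mem_zip_tail.1 hch p hp, fun hpe => hel (hpe ▸ hp)⟩⟩

theorem Reaches.deleteEdge_of_tail {e : V × V} (h : Reaches G a e.1) :
    Reaches (G.deleteEdge e) a e.1 := by
  obtain ⟨l, hl, ha, he⟩ := h
  refine ⟨l, isPathList_deleteEdge_iff.2 ⟨hl, fun hel => ?_⟩, ha, he⟩
  exact hl.2.1.getLast?_ne_fst_of_mem_zip_tail e hel he

theorem Reaches.deleteEdge_of_isSubgraph {A : DiGraph V} {e : V × V} (hA : IsSubgraph A G)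
    (he : e.2 ∉ A.verts) (h : Reaches A a b) : Reaches (G.deleteEdge e) a b :=
  h.mono hA.1 fun f hf => ⟨hA.2.1 hf, fun hfe => he (hfe ▸ (hA.2.2 f hf).2)⟩

end Paths

theorem no_AU_path_after_edge_deletion_general {V : Type*} (D : DiGraph V) (U : Set V)
    (hSC : StronglyConnected D)
    (hU : U ⊆ D.verts)
    (hmin : ∀ e ∈ D.edges, ∃ u ∈ U, ∃ v ∈ U, u ≠ v ∧
      ∀ l : List V, IsPathFrom D l u v → e ∈ l.zip l.tail)
    (A : DiGraph V) (hA : IsSubgraph A D) (hAsc : StronglyConnected A) :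
    ∀ e ∈ D.edges, e.1 ∈ A.verts → e.2 ∉ A.verts →
      ∃ v ∈ U, ¬ ∃ l : List V, IsXYPathList (D.deleteEdge e) A.verts {v} l := by
  intro e he hx hy
  obtain ⟨u, hu, v, hv, -, hpath⟩ := hmin e he
  refine ⟨v, hv, ?_⟩
  rintro ⟨l, hl, hhead, hlast, -⟩
  have hav : Reaches (D.deleteEdge e) (l.head hl.1) v := by
    have hlv : l.getLast hl.1 = v := hlast _ (List.getLast?_eq_some_getLast hl.1)
    exact hlv ▸ ⟨l, hl.isPathFrom⟩
  have hue : Reaches (D.deleteEdge e) u e.1 :=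
    (hSC u (hU hu) e.1 (hA.1 hx)).deleteEdge_of_tail
  have hea : Reaches (D.deleteEdge e) e.1 (l.head hl.1) :=
    (hAsc e.1 hx _ (hhead _ (List.head?_eq_some_head hl.1))).deleteEdge_of_isSubgraph hA hy
  obtain ⟨w, hw, hwu, hwv⟩ := hue.trans (hea.trans hav)
  have hw' := isPathList_deleteEdge_iff.1 hw
  exact hw'.2 (hpath w ⟨hw'.1, hwu, hwv⟩)

/-- If `D` is strongly connected and edge-minimal with the property of
being strongly connected and containing `U`, and `A` is a strongly connected subgraph of
`D`, then for every edge `e` with tail in `V(A)` and head outside `V(A)` there is some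
`v ∈ U` with no directed `A`–`v` path in `D − e`. -/
theorem no_AU_path_after_edge_deletion {V : Type*} (D : DiGraph V) (U : Set V)
    (hWF : D.WF) (hfin : D.verts.Finite) (hSC : StronglyConnected D)
    (hU : U ⊆ D.verts)
    (hmin : ∀ e ∈ D.edges, ∃ u ∈ U, ∃ v ∈ U, u ≠ v ∧
      ∀ l : List V, IsPathFrom D l u v → e ∈ l.zip l.tail)
    (A : DiGraph V) (hA : IsSubgraph A D) (hAsc : StronglyConnected A) :
    ∀ e ∈ D.edges, e.1 ∈ A.verts → e.2 ∉ A.verts →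
      ∃ v ∈ U, ¬ ∃ l : List V, IsXYPathList (D.deleteEdge e) A.verts {v} l :=
  no_AU_path_after_edge_deletion_general D U hSC hU hmin A hA hAsc
end

section
/- Let (C_j)_{j∈[p]} be a sequence of directed cycles such that for every j ≠ k the intersection C_j ∩ C_k is a directed path if |j−k| = 1 and empty otherwise. Then for every k ∈ [p−1] there exist an in-arborescence T^in ⊆ ⋃_{j∈[p]} C_j and an out-arborescence T^out ⊆ ⋃_{j∈[p]} C_j that intersect only in their common root, such that ⋃_{i∈[p]∖[k]} V(C_i) ⊆ V(T^in) and ⋃_{i∈[k]} V(C_i) ∖ V(C_{k+1}) ⊆ V(T^out). -/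
/-!
Let `r` be the last vertex of the path `C_k ∩ C_{k+1}`. Every vertex of `C_{k+1}, …, C_p` is sent
forward along the first of these cycles that contains it, and every vertex of `C_1, …, C_k` is
sent backward along the last of these cycles that contains it. Iterating such a parent map, a
vertex travels around its cycle until it reaches a cycle closer to `r`, which happens because
consecutive cycles meet; on `C_{k+1}` (resp. `C_k`) it finally reaches `r`. The parent maps
therefore define an in- and an out-arborescence rooted at `r`. They meet only in `r` since
non-consecutive cycles are disjoint and the backward walk enters `C_{k+1}` only at `r`: if the
predecessor on `C_k` of a vertex off `C_{k+1}` lies on the path `C_k ∩ C_{k+1}`, it is the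
path's last vertex.
-/

set_option autoImplicit false

open DiGraph

variable {V : Type*}

open Function Set

namespace DiGraph

def reverse (D : DiGraph V) : DiGraph V := ⟨D.verts, Prod.swap ⁻¹' D.edges⟩

def parentTree (S : Set V) (r : V) (f : V → V) : DiGraph V :=
  ⟨S, {e | e.1 ∈ S ∧ e.1 ≠ r ∧ e.2 = f e.1}⟩

end DiGraph

section Reaches

variable {D : DiGraph V} {u v w : V}

theorem Reaches.refl (hv : v ∈ D.verts) : Reaches D v v :=
  ⟨[v], ⟨List.cons_ne_nil _ _, List.nodup_singleton _, by simpa using hv,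
    List.isChain_singleton _⟩, rfl, rfl⟩

theorem Reaches.cons (hu : u ∈ D.verts) (huv : (u, v) ∈ D.edges) (h : Reaches D v w) :
    Reaches D u w := by
  obtain ⟨L, ⟨hne, hnd, hmem, hchain⟩, hhead, hlast⟩ := h
  by_cases huL : u ∈ L
  · obtain ⟨s, t, rfl⟩ := List.append_of_mem huL
    refine ⟨u :: t, ⟨List.cons_ne_nil _ _, hnd.sublist (List.sublist_append_right _ _),
      fun x hx => hmem x (List.mem_append_right _ hx), hchain.right_of_append⟩, rfl, ?_⟩
    rwa [List.getLast?_append_cons] at hlast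
  · obtain ⟨x, L, rfl⟩ := List.exists_cons_of_ne_nil hne
    obtain rfl : x = v := by simpa using hhead
    refine ⟨u :: x :: L, ⟨List.cons_ne_nil _ _, List.nodup_cons.2 ⟨huL, hnd⟩, ?_,
      List.isChain_cons_cons.2 ⟨huv, hchain⟩⟩, rfl, ?_⟩
    · simpa [hu] using hmem
    · simpa [List.getLast?_cons_cons] using hlast

theorem Reaches.reverse (h : Reaches D u v) : Reaches D.reverse v u := by
  obtain ⟨L, ⟨hne, hnd, hmem, hchain⟩, hhead, hlast⟩ := h
  exact ⟨L.reverse, ⟨by simpa using hne, List.nodup_reverse.2 hnd,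
    fun x hx => hmem x (List.mem_reverse.1 hx),
    List.isChain_reverse.2 hchain⟩, by simpa using hlast, by simpa using hhead⟩

theorem reaches_of_iterate_eq {f : V → V} {r : V}
    (hf : ∀ v ∈ D.verts, v ≠ r → f v ∈ D.verts ∧ (v, f v) ∈ D.edges) :
    ∀ (n : ℕ) {v : V}, v ∈ D.verts → f^[n] v = r → Reaches D v r
  | 0, _, hv, rfl => Reaches.refl hv
  | n + 1, v, hv, hn => by
    by_cases hvr : v = r
    · exact hvr ▸ Reaches.refl hv
    · exact .cons hv (hf v hv hvr).2 (reaches_of_iterate_eq hf n (hf v hv hvr).1 hn)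

end Reaches

theorem isSubgraph_of_wf {A D : DiGraph V} (hA : A.WF) (hv : A.verts ⊆ D.verts)
    (he : A.edges ⊆ D.edges) : IsSubgraph A D :=
  ⟨hv, he, fun e he => ⟨(hA e he).1, (hA e he).2.1⟩⟩

theorem isInArborescence_parentTree {S : Set V} {r : V} {f : V → V} (hr : r ∈ S)
    (hf : ∀ v ∈ S, v ≠ r → f v ∈ S ∧ f v ≠ v) (hreach : ∀ v ∈ S, ∃ n, f^[n] v = r) :
    IsInArborescence (parentTree S r f) r := by
  refine ⟨hr, ?_, fun v hv => ?_, fun v hv hvr => ⟨f v, ⟨hv, hvr, rfl⟩, fun u hu => hu.2.2⟩,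
    fun u hu => hu.2.1 rfl⟩
  · rintro ⟨v, w⟩ ⟨hv, hvr, hw : w = f v⟩
    subst hw
    exact ⟨hv, (hf v hv hvr).1, (hf v hv hvr).2.symm⟩
  · obtain ⟨n, hn⟩ := hreach v hv
    exact reaches_of_iterate_eq (D := parentTree S r f)
      (fun u hu hur => ⟨(hf u hu hur).1, hu, hur, rfl⟩) n hv hn

theorem IsInArborescence.reverse {T : DiGraph V} {r : V} (h : IsInArborescence T r) :
    IsOutArborescence T.reverse r := by
  obtain ⟨hr, hwf, hreach, huniq, hroot⟩ := h
  refine ⟨hr, fun e he => ?_, fun v hv => (hreach v hv).reverse, huniq, hroot⟩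
  obtain ⟨h1, h2, h3⟩ := hwf _ he
  exact ⟨h2, h1, Ne.symm h3⟩

section CycleChain

variable {X : ℕ → Set V} {σ : ℕ → Equiv.Perm V} {n j : ℕ} {v r : V}

noncomputable def firstIndex (X : ℕ → Set V) (v : V) : ℕ := sInf {j | v ∈ X j}

noncomputable def chainStep (X : ℕ → Set V) (σ : ℕ → Equiv.Perm V) (v : V) : V :=
  σ (firstIndex X v) v

theorem firstIndex_le (hv : v ∈ X j) : firstIndex X v ≤ j := Nat.sInf_le hv

theorem mem_firstIndex (hv : v ∈ X j) : v ∈ X (firstIndex X v) :=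
  Nat.sInf_mem (s := {j | v ∈ X j}) ⟨j, hv⟩

theorem exists_chainStep_eq (hv : v ∈ X j) : ∃ i ≤ j, v ∈ X i ∧ chainStep X σ v = σ i v :=
  ⟨_, firstIndex_le hv, mem_firstIndex hv, rfl⟩

theorem exists_iterate_mem_of_eqOn {α : Type*} {f g : α → α} {A B : Set α} (hg : MapsTo g A A)
    (hfg : EqOn f g (A \ B)) : ∀ (m : ℕ) {a : α}, a ∈ A → g^[m] a ∈ B → ∃ i, f^[i] a ∈ A ∩ B
  | 0, _, ha, h => ⟨0, ha, h⟩
  | m + 1, a, ha, h => by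
    by_cases haB : a ∈ B
    · exact ⟨0, ha, haB⟩
    · obtain ⟨i, hi⟩ := exists_iterate_mem_of_eqOn hg hfg m (hg ha) h
      exact ⟨i + 1, by rwa [iterate_succ_apply, hfg ⟨ha, haB⟩]⟩

theorem exists_iterate_chainStep_eq (hX : ∀ j ≤ n, (X j).Finite)
    (hσ : ∀ j ≤ n, (σ j).IsCycleOn (X j)) (hmeet : ∀ j < n, (X j ∩ X (j + 1)).Nonempty)
    (hr : r ∈ X 0) (hj : j ≤ n) (hv : v ∈ X j) : ∃ i, (chainStep X σ)^[i] v = r := by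
  induction j using Nat.strong_induction_on generalizing v with
  | _ j ih =>
  rcases j with _ | j
  · obtain ⟨m, hm⟩ := (hσ 0 hj).exists_pow_eq' (hX 0 hj) hv hr
    have hstep : EqOn (chainStep X σ) (σ 0) (X 0 \ {r}) := fun x hx => by
      rw [chainStep, Nat.le_zero.1 (firstIndex_le hx.1)]
    rw [← Equiv.Perm.iterate_eq_pow] at hm
    obtain ⟨i, -, hi⟩ := exists_iterate_mem_of_eqOn (hσ 0 hj).1.mapsTo hstep m hv hm
    exact ⟨i, hi⟩
  · obtain ⟨w, hwj, hwj'⟩ := hmeet j hj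
    obtain ⟨m, hm⟩ := (hσ _ hj).exists_pow_eq' (hX _ hj) hv hwj'
    rw [← Equiv.Perm.iterate_eq_pow] at hm
    -- the walk follows `σ (j + 1)` until it enters an earlier cycle, as the orbit does at `w`
    have hstep : EqOn (chainStep X σ) (σ (j + 1)) (X (j + 1) \ {x | firstIndex X x ≤ j}) :=
      fun x hx => by
        have hxj : ¬ firstIndex X x ≤ j := hx.2
        rw [chainStep, le_antisymm (firstIndex_le hx.1) (by omega)]
    obtain ⟨i, hiX, hi⟩ := exists_iterate_mem_of_eqOn (hσ _ hj).1.mapsTo hstep m hv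
      (show firstIndex X _ ≤ j by rw [hm]; exact firstIndex_le hwj)
    obtain ⟨i', hi'⟩ := ih _ (Nat.lt_succ_of_le hi) (by simp only [mem_ofPred_eq] at hi; omega)
      (mem_firstIndex hiX)
    exact ⟨i' + i, by rw [iterate_add_apply, hi']⟩

theorem isInArborescence_parentTree_chainStep (hX : ∀ j ≤ n, (X j).Finite)
    (hσ : ∀ j ≤ n, (σ j).IsCycleOn (X j)) (hσne : ∀ j ≤ n, ∀ v ∈ X j, σ j v ≠ v)
    (hmeet : ∀ j < n, (X j ∩ X (j + 1)).Nonempty) (hr : r ∈ X 0) {S : Set V} (hrS : r ∈ S)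
    (hS : ∀ v ∈ S, ∃ j ≤ n, v ∈ X j) (hSstep : ∀ v ∈ S, v ≠ r → chainStep X σ v ∈ S) :
    IsInArborescence (parentTree S r (chainStep X σ)) r := by
  refine isInArborescence_parentTree hrS (fun v hv hvr => ⟨hSstep v hv hvr, ?_⟩) fun v hv => ?_
  · obtain ⟨j, hj, hvj⟩ := hS v hv
    obtain ⟨i, hij, hvi, hstep⟩ := exists_chainStep_eq (σ := σ) hvj
    exact hstep ▸ hσne i (hij.trans hj) v hvi
  · obtain ⟨j, hj, hvj⟩ := hS v hv
    exact exists_iterate_chainStep_eq hX hσ hmeet hr hj hvj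

end CycleChain

section Cycle

variable {C C' : DiGraph V} {l m : List V} {u v w : V}

theorem IsCycleGraphOn.verts_eq (hC : IsCycleGraphOn C l) : C.verts = {v | v ∈ l} := by
  rw [hC.2.2]; rfl

theorem IsCycleGraphOn.finite (hC : IsCycleGraphOn C l) : C.verts.Finite :=
  hC.verts_eq ▸ List.finite_toSet l

theorem mem_pathEdges_append_cons_cons (s t : List V) (a b : V) :
    (a, b) ∈ pathEdges (s ++ a :: b :: t) := by
  induction s with
  | nil => simp [pathEdges]
  | cons x s ih => cases s <;> simp_all [pathEdges]

theorem exists_mem_pathEdges_of_ne_getLast (hm : m ≠ []) (hu : u ∈ m)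
    (hne : u ≠ m.getLast hm) : ∃ w ∈ m, (u, w) ∈ pathEdges m := by
  obtain ⟨s, t, rfl⟩ := List.append_of_mem hu
  rcases t with _ | ⟨w, t⟩
  · simp at hne
  · exact ⟨w, by simp, mem_pathEdges_append_cons_cons s t u w⟩

variable [DecidableEq V]

theorem mem_cycleEdges_iff (hl : l.Nodup) :
    (u, w) ∈ cycleEdges l ↔ u ∈ l ∧ w = l.formPerm u := by
  constructor
  · rintro ⟨⟨i, hi⟩, rfl, rfl⟩
    exact ⟨List.getElem_mem _, (List.formPerm_apply_getElem l hl i hi).symm⟩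
  · rintro ⟨hu, rfl⟩
    obtain ⟨i, hi, rfl⟩ := List.getElem_of_mem hu
    exact ⟨⟨i, hi⟩, rfl, (List.formPerm_apply_getElem l hl i hi).symm⟩

namespace IsCycleGraphOn

variable (hC : IsCycleGraphOn C l)
include hC

theorem isCycleOn : l.formPerm.IsCycleOn C.verts :=
  hC.verts_eq ▸ hC.2.1.isCycleOn_formPerm

theorem formPerm_ne (hv : v ∈ C.verts) : l.formPerm v ≠ v :=
  (List.formPerm_apply_mem_ne_self_iff l hC.2.1 v (hC.verts_eq.subset hv)).2 hC.1

theorem mem_edges_iff : (u, w) ∈ C.edges ↔ u ∈ C.verts ∧ w = l.formPerm u := by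
  rw [hC.2.2]; exact mem_cycleEdges_iff hC.2.1

theorem formPerm_mem (hv : v ∈ C.verts) : l.formPerm v ∈ C.verts :=
  hC.isCycleOn.apply_mem_iff.2 hv

theorem formPerm_inv_mem (hv : v ∈ C.verts) : l.formPerm⁻¹ v ∈ C.verts :=
  hC.isCycleOn.inv.apply_mem_iff.2 hv

theorem formPerm_inv_ne (hv : v ∈ C.verts) : l.formPerm⁻¹ v ≠ v := fun h =>
  hC.formPerm_ne hv (Equiv.Perm.inv_eq_iff_eq.1 h).symm

theorem mk_formPerm_mem_edges (hv : v ∈ C.verts) : (v, l.formPerm v) ∈ C.edges :=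
  hC.mem_edges_iff.2 ⟨hv, rfl⟩

theorem mk_formPerm_inv_mem_edges (hv : v ∈ C.verts) : (l.formPerm⁻¹ v, v) ∈ C.edges :=
  hC.mem_edges_iff.2 ⟨hC.formPerm_inv_mem hv, (l.formPerm.apply_symm_apply v).symm⟩

theorem formPerm_inv_eq_getLast (hCm : C ∩ C' = pathGraph m) (hm : m ≠ []) (hv : v ∈ C.verts)
    (hv' : v ∉ C'.verts) (hu : l.formPerm⁻¹ v ∈ C'.verts) : l.formPerm⁻¹ v = m.getLast hm := by
  have hum : l.formPerm⁻¹ v ∈ m := by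
    have : l.formPerm⁻¹ v ∈ (C ∩ C').verts := ⟨hC.formPerm_inv_mem hv, hu⟩
    rwa [hCm] at this
  by_contra hne
  obtain ⟨w, hwm, huw⟩ := exists_mem_pathEdges_of_ne_getLast hm hum hne
  have huw : (l.formPerm⁻¹ v, w) ∈ (C ∩ C').edges := by rw [hCm]; exact huw
  obtain rfl : w = v := by simpa using (hC.mem_edges_iff.1 huw.1).2
  have : w ∈ (C ∩ C').verts := by rw [hCm]; exact hwm
  exact hv' this.2

end IsCycleGraphOn

end Cycle

theorem exists_le_mem_add_of_mem_biUnion {Y : ℕ → Set V} {a b : ℕ} {v : V}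
    (hv : v ∈ ⋃ i ∈ Finset.Icc a b, Y i) : ∃ j ≤ b - a, v ∈ Y (a + j) := by
  simp only [mem_iUnion, Finset.mem_Icc] at hv
  obtain ⟨i, ⟨hai, hib⟩, hvi⟩ := hv
  exact ⟨i - a, by omega, by rwa [Nat.add_sub_cancel' hai]⟩

theorem exists_le_mem_sub_of_mem_biUnion {Y : ℕ → Set V} {a b : ℕ} {v : V}
    (hv : v ∈ ⋃ i ∈ Finset.Icc a b, Y i) : ∃ j ≤ b - a, v ∈ Y (b - j) := by
  simp only [mem_iUnion, Finset.mem_Icc] at hv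
  obtain ⟨i, ⟨hai, hib⟩, hvi⟩ := hv
  exact ⟨b - i, by omega, by rwa [Nat.sub_sub_self hib]⟩

section CycleChainTrees

variable {p : ℕ} {C : ℕ → DiGraph V} {l : ℕ → List V}

theorem biUnion_verts_inter_eq_singleton
    (hdisj : ∀ i j, 1 ≤ i → i + 2 ≤ j → j ≤ p → Disjoint (C i).verts (C j).verts)
    {k : ℕ} (hkp : k + 1 ≤ p) {r : V} (hr : r ∈ (C (k + 1)).verts) :
    (⋃ i ∈ Finset.Icc (k + 1) p, (C i).verts) ∩
      ((⋃ i ∈ Finset.Icc 1 k, (C i).verts) \ (C (k + 1)).verts ∪ {r}) = {r} := by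
  refine subset_antisymm ?_ fun x (hx : x = r) =>
    ⟨mem_biUnion (Finset.mem_Icc.2 ⟨le_rfl, hkp⟩) (hx ▸ hr), Or.inr hx⟩
  rintro x ⟨hx, ⟨hx', hxk⟩ | hxr⟩
  · simp only [mem_iUnion, Finset.mem_Icc] at hx hx'
    obtain ⟨j, ⟨hj, hjp⟩, hxj⟩ := hx
    obtain ⟨i, ⟨hi, hik⟩, hxi⟩ := hx'
    obtain rfl | hj : j = k + 1 ∨ k + 2 ≤ j := by omega
    · exact absurd hxj hxk
    · exact absurd hxj (disjoint_left.1 (hdisj i j hi (by omega) hjp) hxi)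
  · exact hxr

theorem biUnion_verts_subset_biUnion {a b : ℕ} (h : Finset.Icc a b ⊆ Finset.Icc 1 p) :
    ⋃ i ∈ Finset.Icc a b, (C i).verts ⊆ (biUnion ↑(Finset.Icc 1 p) C).verts :=
  biUnion_mono (s' := (↑(Finset.Icc a b) : Set ℕ)) (Finset.coe_subset.2 h) fun _ _ => subset_rfl

variable [DecidableEq V]

theorem IsCycleGraphOn.formPerm_inv_notMem_or_eq_getLast {j k : ℕ} {c m : List V} {v : V}
    (hCj : IsCycleGraphOn (C j) c)
    (hdisj : ∀ i j, 1 ≤ i → i + 2 ≤ j → j ≤ p → Disjoint (C i).verts (C j).verts)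
    (hj : 1 ≤ j) (hjk : j ≤ k) (hkp : k + 1 ≤ p) (hm : m ≠ [])
    (hCm : C k ∩ C (k + 1) = pathGraph m) (hv : v ∈ (C j).verts) (hv' : v ∉ (C (k + 1)).verts) :
    c.formPerm⁻¹ v ∉ (C (k + 1)).verts ∨ c.formPerm⁻¹ v = m.getLast hm := by
  refine or_iff_not_imp_left.2 fun hu => ?_
  rw [not_not] at hu
  obtain rfl : j = k := by
    by_contra hjk'
    exact disjoint_left.1 (hdisj j (k + 1) hj (by omega) hkp) (hCj.formPerm_inv_mem hv) hu
  exact hCj.formPerm_inv_eq_getLast hCm hm hv hv' hu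

theorem exists_inArborescence_of_cycleChain
    (hC : ∀ j, 1 ≤ j → j ≤ p → IsCycleGraphOn (C j) (l j))
    (hmeet : ∀ j, 1 ≤ j → j + 1 ≤ p → ((C j).verts ∩ (C (j + 1)).verts).Nonempty)
    {a : ℕ} (ha : 1 ≤ a) (hap : a ≤ p) {r : V} (hr : r ∈ (C a).verts) :
    ∃ T, IsInArborescence T r ∧ IsSubgraph T (biUnion (↑(Finset.Icc 1 p)) C) ∧
      T.verts = ⋃ i ∈ Finset.Icc a p, (C i).verts := by
  set X : ℕ → Set V := fun j => (C (a + j)).verts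
  set σ : ℕ → Equiv.Perm V := fun j => (l (a + j)).formPerm
  set S := ⋃ i ∈ Finset.Icc a p, (C i).verts
  have hcyc : ∀ j ≤ p - a, IsCycleGraphOn (C (a + j)) (l (a + j)) :=
    fun j hj => hC _ (by omega) (by omega)
  have hstep : ∀ v ∈ S, ∃ j ≤ p - a, v ∈ X j ∧ chainStep X σ v = σ j v := fun v hv =>
    let ⟨_, hj, hvj⟩ := exists_le_mem_add_of_mem_biUnion hv
    let ⟨i, hij, hvi, h⟩ := exists_chainStep_eq hvj
    ⟨i, hij.trans hj, hvi, h⟩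
  have hT : IsInArborescence (parentTree S r (chainStep X σ)) r := by
    refine isInArborescence_parentTree_chainStep (fun j hj => (hcyc j hj).finite)
      (fun j hj => (hcyc j hj).isCycleOn) (fun j hj _ => (hcyc j hj).formPerm_ne)
      (fun j hj => hmeet (a + j) (by omega) (by omega)) hr
      (mem_biUnion (Finset.left_mem_Icc.2 hap) hr) (fun v hv => exists_le_mem_add_of_mem_biUnion hv)
      fun v hv _ => ?_
    obtain ⟨j, hj, hvj, h⟩ := hstep v hv
    exact h ▸ mem_biUnion (Finset.mem_Icc.2 ⟨by omega, by omega⟩) ((hcyc j hj).formPerm_mem hvj)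
  refine ⟨_, hT, isSubgraph_of_wf hT.2.1
    (biUnion_verts_subset_biUnion (Finset.Icc_subset_Icc ha le_rfl)) ?_, rfl⟩
  rintro ⟨v, w⟩ ⟨hv, -, hw : w = chainStep X σ v⟩
  obtain ⟨j, hj, hvj, h⟩ := hstep v hv
  refine mem_biUnion (Finset.mem_Icc.2 ⟨by omega, by omega⟩ : a + j ∈ Finset.Icc 1 p) ?_
  rw [hw, h]
  exact (hcyc j hj).mk_formPerm_mem_edges hvj

theorem exists_outArborescence_of_cycleChain
    (hC : ∀ j, 1 ≤ j → j ≤ p → IsCycleGraphOn (C j) (l j))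
    (hmeet : ∀ j, 1 ≤ j → j + 1 ≤ p → ((C j).verts ∩ (C (j + 1)).verts).Nonempty)
    (hdisj : ∀ i j, 1 ≤ i → i + 2 ≤ j → j ≤ p → Disjoint (C i).verts (C j).verts)
    {k : ℕ} (hk : 1 ≤ k) (hkp : k + 1 ≤ p) {m : List V} (hm : m ≠ [])
    (hCm : C k ∩ C (k + 1) = pathGraph m) :
    ∃ T, IsOutArborescence T (m.getLast hm) ∧ IsSubgraph T (biUnion (↑(Finset.Icc 1 p)) C) ∧
      T.verts = (⋃ i ∈ Finset.Icc 1 k, (C i).verts) \ (C (k + 1)).verts ∪ {m.getLast hm} := by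
  set r := m.getLast hm
  have hr : r ∈ (C k ∩ C (k + 1)).verts := by rw [hCm]; exact List.getLast_mem hm
  set X : ℕ → Set V := fun j => (C (k - j)).verts
  set σ : ℕ → Equiv.Perm V := fun j => (l (k - j)).formPerm⁻¹
  set S := (⋃ i ∈ Finset.Icc 1 k, (C i).verts) \ (C (k + 1)).verts ∪ {r}
  have hcyc : ∀ j ≤ k - 1, IsCycleGraphOn (C (k - j)) (l (k - j)) :=
    fun j hj => hC _ (by omega) (by omega)
  have hS : ∀ v ∈ S, v ≠ r → v ∈ (⋃ i ∈ Finset.Icc 1 k, (C i).verts) \ (C (k + 1)).verts := by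
    rintro v (hv | rfl) hvr
    exacts [hv, absurd rfl hvr]
  have hstep : ∀ v ∈ ⋃ i ∈ Finset.Icc 1 k, (C i).verts,
      ∃ j ≤ k - 1, v ∈ X j ∧ chainStep X σ v = σ j v := fun v hv =>
    let ⟨_, hj, hvj⟩ := exists_le_mem_sub_of_mem_biUnion hv
    let ⟨i, hij, hvi, h⟩ := exists_chainStep_eq hvj
    ⟨i, hij.trans hj, hvi, h⟩
  have hT : IsInArborescence (parentTree S r (chainStep X σ)) r := by
    refine isInArborescence_parentTree_chainStep (fun j hj => (hcyc j hj).finite)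
      (fun j hj => (hcyc j hj).isCycleOn.inv) (fun j hj _ => (hcyc j hj).formPerm_inv_ne)
      (fun j hj => ?_) hr.1 (Or.inr rfl) (fun v hv => ?_) fun v hv hvr => ?_
    · have := hmeet (k - (j + 1)) (by omega) (by omega)
      rwa [show k - (j + 1) + 1 = k - j by omega, inter_comm] at this
    · by_cases hvr : v = r
      · exact ⟨0, Nat.zero_le _, hvr ▸ hr.1⟩
      · exact exists_le_mem_sub_of_mem_biUnion (hS v hv hvr).1
    · obtain ⟨hv, hv'⟩ := hS v hv hvr
      obtain ⟨j, hj, hvj, h⟩ := hstep v hv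
      rw [h]
      exact ((hcyc j hj).formPerm_inv_notMem_or_eq_getLast hdisj (by omega) (by omega) hkp hm
        hCm hvj hv').imp (fun hu => ⟨mem_biUnion (Finset.mem_Icc.2 ⟨by omega, by omega⟩)
          ((hcyc j hj).formPerm_inv_mem hvj), hu⟩) id
  refine ⟨_, hT.reverse, isSubgraph_of_wf hT.reverse.2.1 (union_subset
    (sdiff_subset.trans (biUnion_verts_subset_biUnion (Finset.Icc_subset_Icc le_rfl (by omega))))
    (singleton_subset_iff.2 (mem_biUnion (Finset.mem_Icc.2 ⟨hk, by omega⟩) hr.1))) ?_, rfl⟩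
  rintro ⟨u, v⟩ ⟨hv, hvr, hu : u = chainStep X σ v⟩
  obtain ⟨j, hj, hvj, h⟩ := hstep v (hS v hv hvr).1
  refine mem_biUnion (Finset.mem_Icc.2 ⟨by omega, by omega⟩ : k - j ∈ Finset.Icc 1 p) ?_
  rw [hu, h]
  exact (hcyc j hj).mk_formPerm_inv_mem_edges hvj

end CycleChainTrees

/-- For a chain of directed cycles `(C_j)_{j∈[p]}` and every
`k ∈ [p−1]` there exist an in-arborescence and an out-arborescence inside `⋃ C_j`
meeting only in their common root, covering the prescribed vertex sets. -/
theorem exists_in_out_arborescences {V : Type*} (p : ℕ) (C : ℕ → DiGraph V)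
    (hcyc : ∀ j ∈ Finset.Icc 1 p, IsCycleGraph (C j))
    (hint : ∀ j ∈ Finset.Icc 1 p, ∀ k ∈ Finset.Icc 1 p, j ≠ k →
      (Nat.dist j k = 1 → IsPathGraph (C j ∩ C k)) ∧
      (Nat.dist j k ≠ 1 → C j ∩ C k = DiGraph.emptyGraph))
    (k : ℕ) (hk : k ∈ Finset.Icc 1 (p - 1)) :
    ∃ (r : V) (Tin Tout : DiGraph V),
      IsInArborescence Tin r ∧ IsOutArborescence Tout r ∧
      IsSubgraph Tin (DiGraph.biUnion (↑(Finset.Icc 1 p)) C) ∧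
      IsSubgraph Tout (DiGraph.biUnion (↑(Finset.Icc 1 p)) C) ∧
      Tin.verts ∩ Tout.verts = {r} ∧
      (⋃ i ∈ Finset.Icc (k + 1) p, (C i).verts) ⊆ Tin.verts ∧
      (⋃ i ∈ Finset.Icc 1 k, (C i).verts) \ (C (k + 1)).verts ⊆ Tout.verts := by
  classical
  obtain ⟨hk, hkp⟩ : 1 ≤ k ∧ k + 1 ≤ p := by rw [Finset.mem_Icc] at hk; omega
  have hmem : ∀ j, 1 ≤ j → j ≤ p → j ∈ Finset.Icc 1 p := fun j h1 h2 => Finset.mem_Icc.2 ⟨h1, h2⟩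
  choose! l hl using hcyc
  have hC : ∀ j, 1 ≤ j → j ≤ p → IsCycleGraphOn (C j) (l j) := fun j h1 h2 => hl j (hmem j h1 h2)
  have hpath : ∀ j, 1 ≤ j → j + 1 ≤ p → IsPathGraph (C j ∩ C (j + 1)) := fun j h1 h2 =>
    (hint j (hmem j h1 (by omega)) (j + 1) (hmem _ (by omega) h2) (by omega)).1 (by simp [Nat.dist])
  have hmeet : ∀ j, 1 ≤ j → j + 1 ≤ p → ((C j).verts ∩ (C (j + 1)).verts).Nonempty := by
    intro j h1 h2
    obtain ⟨m, hm, -, hCm⟩ := hpath j h1 h2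
    exact ⟨m.head hm, show _ ∈ (C j ∩ C (j + 1)).verts by rw [hCm]; exact List.head_mem hm⟩
  have hdisj : ∀ i j, 1 ≤ i → i + 2 ≤ j → j ≤ p → Disjoint (C i).verts (C j).verts := by
    intro i j h1 h2 h3
    have := congrArg DiGraph.verts
      ((hint i (hmem i h1 (by omega)) j (hmem j (by omega) h3) (by omega)).2
        (by simp [Nat.dist]; omega))
    exact disjoint_iff_inter_eq_empty.2 this
  obtain ⟨m, hm, -, hCm⟩ := hpath k hk hkp
  have hr : m.getLast hm ∈ (C (k + 1)).verts :=
    (show _ ∈ (C k ∩ C (k + 1)).verts by rw [hCm]; exact List.getLast_mem hm).2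
  obtain ⟨Tin, hTin, hTinC, hTinV⟩ := exists_inArborescence_of_cycleChain hC hmeet (by omega) hkp hr
  obtain ⟨Tout, hTout, hToutC, hToutV⟩ :=
    exists_outArborescence_of_cycleChain hC hmeet hdisj hk hkp hm hCm
  refine ⟨_, Tin, Tout, hTin, hTout, hTinC, hToutC, ?_, hTinV.ge, hToutV ▸ subset_union_left⟩
  rw [hTinV, hToutV]
  exact biUnion_verts_inter_eq_singleton hdisj hkp hr
end
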